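/- There exist constants C > 0 and b₀ > 0 (depending only on d) such that for all b ∈ (0, b₀) and all s ∈ Int(S_d), 0 < A_b(s) ≤ [ b^{(d+1)/2} (1/b + d)^{d+1/2} / ( (4π)^{d/2} √( (1−‖s‖₁) ∏_{i=1}^d s_i ) ) ] (1 + C b), where A_b(s) = ∫_{S_d} κ_{s,b}(x)² dx. -/

import Mathlib

open MeasureTheory ProbabilityTheory Real Filter Finset Matrix

noncomputable section

/-- The unit simplex `S_d = {x ∈ [0,1]^d : x_1 + … + x_d ≤ 1}`. -/
def Sd (d : ℕ) : Set (Fin d → ℝ) :=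
  {x | (∀ i, 0 ≤ x i ∧ x i ≤ 1) ∧ ∑ i, x i ≤ 1}

/-- The interior of the unit simplex. -/
def SdInt (d : ℕ) : Set (Fin d → ℝ) :=
  {x | (∀ i, 0 < x i) ∧ ∑ i, x i < 1}

/-- The Dirichlet(u, v) density on the simplex. -/
def Kdir {d : ℕ} (u : Fin d → ℝ) (v : ℝ) (x : Fin d → ℝ) : ℝ :=
  (Gamma ((∑ i, u i) + v) / (Gamma v * ∏ i, Gamma (u i))) *
    (1 - ∑ i, x i) ^ (v - 1) * ∏ i, (x i) ^ (u i - 1)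

/-- The locally adaptive Dirichlet kernel `κ_{s,b}`. -/
def kappa {d : ℕ} (s : Fin d → ℝ) (b : ℝ) : (Fin d → ℝ) → ℝ :=
  Kdir (fun i => s i / b + 1) ((1 - ∑ i, s i) / b + 1)

/-- `A_b(s) = ∫_{S_d} κ_{s,b}(x)² dx`. -/
def Adir {d : ℕ} (b : ℝ) (s : Fin d → ℝ) : ℝ :=
  ∫ x in Sd d, (kappa s b x) ^ 2

/-- Second partial derivative `∂² m / ∂ s_k ∂ s_ℓ` at `s`. -/
def d2 {d : ℕ} (m : (Fin d → ℝ) → ℝ) (k l : Fin d) (s : Fin d → ℝ) : ℝ :=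
  fderiv ℝ (fun x => fderiv ℝ m x (Pi.single l 1)) s (Pi.single k 1)

/-- The function `h_J(s)` from the paper. -/
def hJfun {d : ℕ} (m : (Fin d → ℝ) → ℝ) (J : Finset (Fin d)) (lam : Fin d → ℝ)
    (s : Fin d → ℝ) : ℝ :=
  if J = Finset.univ then
    ∑ k, ∑ l, (1 / 2 : ℝ) * ((lam k + 1) * (if k = l then 1 else 0) + 1) * d2 m k l s
  else
    ∑ k ∈ Jᶜ, ∑ l ∈ Jᶜ, (1 / 2 : ℝ) * ((if k = l then s k else 0) - s k * s l) * d2 m k l s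

/-- The function `ψ_J(s)` from the paper. -/
def psiJ {d : ℕ} (J : Finset (Fin d)) (s : Fin d → ℝ) : ℝ :=
  ((4 * π) ^ ((d : ℝ) - J.card) * (1 - ∑ i, s i) * ∏ i ∈ Jᶜ, s i) ^ (-(1 : ℝ) / 2)

/-- The product `∏_{i ∈ J} Γ(2λ_i+1) / (2^{2λ_i+1} Γ(λ_i+1)²)`. -/
def gamProd {d : ℕ} (J : Finset (Fin d)) (lam : Fin d → ℝ) : ℝ :=
  ∏ i ∈ J, Gamma (2 * lam i + 1) / ((2 : ℝ) ^ (2 * lam i + 1) * Gamma (lam i + 1) ^ 2)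

/-- The local linear smoother with Dirichlet kernel. -/
def mLL {d n : ℕ} (b : ℝ) (X : Fin n → Fin d → ℝ) (Y : Fin n → ℝ) (s : Fin d → ℝ) : ℝ :=
  let 𝒳 : Matrix (Fin n) (Fin (d + 1)) ℝ :=
    Matrix.of fun i => Fin.cases 1 (fun k => X i k - s k)
  let W : Matrix (Fin n) (Fin n) ℝ := Matrix.diagonal fun i => kappa s b (X i)
  ((𝒳ᵀ * W * 𝒳)⁻¹ *ᵥ (𝒳ᵀ *ᵥ (W *ᵥ Y))) 0

/-- The Nadaraya–Watson estimator with Dirichlet kernel. -/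
def mNW {d n : ℕ} (b : ℝ) (X : Fin n → Fin d → ℝ) (Y : Fin n → ℝ) (s : Fin d → ℝ) : ℝ :=
  (∑ i, Y i * kappa s b (X i)) / ∑ j, kappa s b (X j)

/-- Central second moment `C_b(s; k, ℓ)` of the Dirichlet kernel. -/
def CbM {d : ℕ} (b : ℝ) (s : Fin d → ℝ) (k l : Fin d) : ℝ :=
  ∫ x in Sd d, (x k - s k) * (x l - s l) * kappa s b x

end

/-!
Squaring the Dirichlet density and integrating it with Dirichlet's integral gives the closed form
`A_b(s) = Γ(1/b+d+1)² / Γ(2/b+d+1) · ∏ⱼ Γ(2aⱼ+1) / Γ(aⱼ+1)²` over `a₀ = (1 - ‖s‖₁)/b` and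
`aᵢ = sᵢ/b`. Legendre's duplication formula together with the log-convexity of `Γ` bounds each
factor `Γ(2a+1)/Γ(a+1)²` by `4ᵃ/√(πa)` and the leading factor by
`√π (1/b+d+1)^(d+1/2) / 2^(2/b+d)`. The powers of `4` cancel because `∑ⱼ aⱼ = 1/b`, which leaves
the bound with `1/b + d + 1` in place of `1/b + d`, and the ratio of the two powers is at most
`1 + (2^(d+1) - 1) b`.
-/

theorem Real.Gamma_add_half_le {x : ℝ} (hx : 0 < x) : Gamma (x + 1 / 2) ≤ Gamma x * √x := by
  have hG := Gamma_pos_of_pos hx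
  calc Gamma (x + 1 / 2) = Gamma (1 / 2 * x + 1 / 2 * (x + 1)) := by ring_nf
    _ ≤ Gamma x ^ (1 / 2 : ℝ) * Gamma (x + 1) ^ (1 / 2 : ℝ) :=
      Gamma_mul_add_mul_le_rpow_Gamma_mul_rpow_Gamma hx (by linarith) one_half_pos one_half_pos
        (by norm_num)
    _ = Gamma x * √x := by
      rw [Gamma_add_one hx.ne', mul_comm x, mul_rpow hG.le hx.le, ← mul_assoc, ← rpow_add hG,
        ← sqrt_eq_rpow]
      norm_num

theorem Real.Gamma_add_nat_div_two_le {x : ℝ} (hx : 0 < x) (n : ℕ) :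
    Gamma (x + n / 2) ≤ Gamma x * (x + n / 2) ^ ((n : ℝ) / 2) := by
  induction n with
  | zero => simp
  | succ n ih =>
    have hy : 0 < x + n / 2 := by positivity
    push_cast
    calc Gamma (x + (n + 1) / 2) = Gamma (x + n / 2 + 1 / 2) := by ring_nf
      _ ≤ Gamma (x + n / 2) * √(x + n / 2) := Gamma_add_half_le hy
      _ ≤ Gamma x * (x + n / 2) ^ ((n : ℝ) / 2) * (x + n / 2) ^ (1 / 2 : ℝ) := by
        rw [sqrt_eq_rpow]; gcongr
      _ = Gamma x * (x + n / 2) ^ (((n : ℝ) + 1) / 2) := by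
        rw [mul_assoc, ← rpow_add hy]; ring_nf
      _ ≤ Gamma x * (x + (n + 1) / 2) ^ (((n : ℝ) + 1) / 2) := by
        gcongr
        linarith

/-- The central binomial coefficient `(2a).choose a`, interpolated to real `a`. -/
noncomputable def gammaCentralBinom (a : ℝ) : ℝ := Gamma (2 * a + 1) / Gamma (a + 1) ^ 2

theorem gammaCentralBinom_pos {a : ℝ} (ha : -(1 / 2) < a) : 0 < gammaCentralBinom a :=
  div_pos (Gamma_pos_of_pos (by linarith)) (pow_pos (Gamma_pos_of_pos (by linarith)) 2)

/-- Legendre's duplication formula at `a + 1/2` turns `Γ(2a+1)` into `4ᵃ Γ(a+1/2) Γ(a+1) / √π`,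
and `Γ(a+1/2) √a ≤ Γ(a+1)`. -/
theorem gammaCentralBinom_le {a : ℝ} (ha : 0 < a) :
    gammaCentralBinom a ≤ 4 ^ a / √(π * a) := by
  have hduplication := Gamma_mul_Gamma_add_half (a + 1 / 2)
  rw [show 2 * (a + 1 / 2) = 2 * a + 1 by ring, show a + 1 / 2 + 1 / 2 = a + 1 by ring,
    show 1 - (2 * a + 1) = -(2 * a) by ring, rpow_neg zero_le_two,
    rpow_mul zero_le_two] at hduplication
  have hhalf : Gamma (a + 1 / 2) * √a ≤ Gamma (a + 1) := by
    rw [Gamma_add_one ha.ne']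
    nlinarith [Gamma_add_half_le ha, sq_sqrt ha.le, sqrt_nonneg a, Gamma_pos_of_pos ha]
  have hGa : 0 < Gamma (a + 1) := Gamma_pos_of_pos (by linarith)
  rw [gammaCentralBinom, div_le_div_iff₀ (by positivity) (by positivity), sqrt_mul pi_pos.le]
  norm_num at hduplication
  have hsqrtpi : Gamma (2 * a + 1) * √π = 4 ^ a * (Gamma (a + 1 / 2) * Gamma (a + 1)) := by
    rw [hduplication]; field_simp
  calc Gamma (2 * a + 1) * (√π * √a) = 4 ^ a * (Gamma (a + 1 / 2) * √a) * Gamma (a + 1) := by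
        linear_combination √a * hsqrtpi
    _ ≤ 4 ^ a * Gamma (a + 1) * Gamma (a + 1) := by gcongr
    _ = 4 ^ a * Gamma (a + 1) ^ 2 := by ring

/-- Legendre's duplication formula at `u = t + (d + 1)/2` writes `Γ(2t+d+1)` through
`Γ(u) Γ(u + 1/2)`, and `Γ(t+d+1)` is bounded by each of these two factors times a power of
`t + d + 1`. -/
theorem Real.Gamma_sq_div_Gamma_two_mul_le {t : ℝ} (ht : -(1 / 2) < t) (d : ℕ) :
    Gamma (t + d + 1) ^ 2 / Gamma (2 * t + d + 1)
      ≤ √π * (t + d + 1) ^ ((d : ℝ) + 1 / 2) / 2 ^ (2 * t + d) := by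
  have hd : (0 : ℝ) ≤ d := d.cast_nonneg
  set u := t + ((d : ℝ) + 1) / 2 with hu_def
  have hu : 0 < u := by linarith
  have hduplication := Gamma_mul_Gamma_add_half u
  rw [show 2 * u = 2 * t + d + 1 by ring, show 1 - (2 * t + d + 1) = -(2 * t + d) by ring,
    rpow_neg zero_le_two] at hduplication
  have hT : 0 < t + d + 1 := by linarith
  have hle₁ : Gamma (t + d + 1) ≤ Gamma u * (t + d + 1) ^ (((d : ℝ) + 1) / 2) := by
    have h := Gamma_add_nat_div_two_le hu (d + 1)
    rw [show u + ((d + 1 : ℕ) : ℝ) / 2 = t + d + 1 by rw [hu_def]; push_cast; ring] at h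
    exact_mod_cast h
  have hle₂ : Gamma (t + d + 1) ≤ Gamma (u + 1 / 2) * (t + d + 1) ^ ((d : ℝ) / 2) := by
    have h := Gamma_add_nat_div_two_le (by linarith : 0 < u + 1 / 2) d
    rwa [show u + 1 / 2 + (d : ℝ) / 2 = t + d + 1 by rw [hu_def]; ring] at h
  have hsq : Gamma (t + d + 1) ^ 2
      ≤ Gamma u * Gamma (u + 1 / 2) * (t + d + 1) ^ ((d : ℝ) + 1 / 2) := by
    calc Gamma (t + d + 1) ^ 2
        ≤ (Gamma u * (t + d + 1) ^ (((d : ℝ) + 1) / 2)) *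
            (Gamma (u + 1 / 2) * (t + d + 1) ^ ((d : ℝ) / 2)) := by
          rw [sq]; exact mul_le_mul hle₁ hle₂ (Gamma_pos_of_pos hT).le (by positivity)
      _ = _ := by rw [mul_mul_mul_comm, ← rpow_add hT]; ring_nf
  rw [div_le_div_iff₀ (Gamma_pos_of_pos (by linarith)) (by positivity)]
  calc Gamma (t + d + 1) ^ 2 * 2 ^ (2 * t + d)
      ≤ Gamma u * Gamma (u + 1 / 2) * (t + d + 1) ^ ((d : ℝ) + 1 / 2) * 2 ^ (2 * t + d) := by
        gcongr
    _ = √π * (t + d + 1) ^ ((d : ℝ) + 1 / 2) * Gamma (2 * t + d + 1) := by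
        rw [hduplication]; field_simp

theorem Real.integral_rpow_mul_sub_rpow {p q R : ℝ} (hp : -1 < p) (hq : -1 < q) (hR : 0 < R) :
    ∫ y in (0 : ℝ)..R, y ^ p * (R - y) ^ q
      = R ^ (p + q + 1) * (Gamma (p + 1) * Gamma (q + 1) / Gamma (p + q + 2)) := by
  have hbeta := Complex.betaIntegral_scaled (p + 1) (q + 1) hR
  have hre : ∀ r : ℝ, -1 < r → 0 < ((r : ℂ) + 1).re := fun r hr => by simp; linarith
  rw [Complex.betaIntegral_eq_Gamma_mul_div _ _ (hre p hp) (hre q hq)] at hbeta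
  have hlhs : ∫ y in (0 : ℝ)..R, (y : ℂ) ^ ((p : ℂ) + 1 - 1) * ((R : ℂ) - y) ^ ((q : ℂ) + 1 - 1)
      = ((∫ y in (0 : ℝ)..R, y ^ p * (R - y) ^ q : ℝ) : ℂ) := by
    rw [← intervalIntegral.integral_ofReal]
    refine intervalIntegral.integral_congr fun y hy => ?_
    rw [Set.uIcc_of_le hR.le] at hy
    simp only [add_sub_cancel_right, Complex.ofReal_mul]
    rw [Complex.ofReal_cpow hy.1, Complex.ofReal_cpow (by linarith [hy.2]), Complex.ofReal_sub]
  rw [hlhs, show (p : ℂ) + 1 + (q + 1) - 1 = ((p + q + 1 : ℝ) : ℂ) by push_cast; ring,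
    ← Complex.ofReal_cpow hR.le,
    show (p : ℂ) + 1 + (q + 1) = ((p + q + 2 : ℝ) : ℂ) by push_cast; ring,
    show (p : ℂ) + 1 = ((p + 1 : ℝ) : ℂ) by push_cast; ring,
    show (q : ℂ) + 1 = ((q + 1 : ℝ) : ℂ) by push_cast; ring] at hbeta
  simp only [Complex.Gamma_ofReal] at hbeta
  exact_mod_cast hbeta

theorem Real.setIntegral_Icc_rpow_mul_sub_rpow {p q R : ℝ} (hp : 0 ≤ p) (hq : 0 ≤ q)
    (hR : 0 ≤ R) :
    ∫ y in Set.Icc 0 R, y ^ p * (R - y) ^ q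
      = R ^ (p + q + 1) * (Gamma (p + 1) * Gamma (q + 1) / Gamma (p + q + 2)) := by
  rcases hR.eq_or_lt with rfl | hR
  · simp [zero_rpow (by linarith : p + q + 1 ≠ 0)]
  · rw [integral_Icc_eq_integral_Ioc, ← intervalIntegral.integral_of_le hR.le,
      integral_rpow_mul_sub_rpow (by linarith) (by linarith) hR]

theorem mem_Sd_iff {d : ℕ} {x : Fin d → ℝ} : x ∈ Sd d ↔ (∀ i, 0 ≤ x i) ∧ ∑ i, x i ≤ 1 := by
  refine ⟨fun hx => ⟨fun i => (hx.1 i).1, hx.2⟩, fun ⟨hx0, hx1⟩ => ⟨fun i => ⟨hx0 i, ?_⟩, hx1⟩⟩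
  exact (single_le_sum (fun j _ => hx0 j) (mem_univ i)).trans hx1

theorem SdInt_subset_Sd (d : ℕ) : SdInt d ⊆ Sd d := fun _ hx =>
  mem_Sd_iff.2 ⟨fun i => (hx.1 i).le, hx.2.le⟩

theorem isCompact_Sd (d : ℕ) : IsCompact (Sd d) := by
  have hSd : Sd d = Set.Icc 0 1 ∩ {x | ∑ i, x i ≤ 1} := by
    ext x
    simp [Sd, Pi.le_def, forall_and]
  rw [hSd]
  exact isCompact_Icc.inter_right (isClosed_le (by fun_prop) continuous_const)

theorem measurableSet_Sd (d : ℕ) : MeasurableSet (Sd d) :=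
  (isCompact_Sd d).isClosed.measurableSet

theorem cons_mem_Sd_iff {d : ℕ} {y : ℝ} {z : Fin d → ℝ} :
    Fin.cons y z ∈ Sd (d + 1) ↔ z ∈ Sd d ∧ y ∈ Set.Icc 0 (1 - ∑ i, z i) := by
  simp only [mem_Sd_iff, Fin.forall_fin_succ, Fin.sum_univ_succ, Fin.cons_zero, Fin.cons_succ,
    Set.mem_Icc]
  constructor
  · rintro ⟨⟨hy, hz⟩, hsum⟩
    exact ⟨⟨hz, by linarith [sum_nonneg fun i (_ : i ∈ univ) => hz i]⟩, hy, by linarith⟩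
  · rintro ⟨⟨hz, -⟩, hy, hyz⟩
    exact ⟨⟨hy, hz⟩, by linarith⟩

theorem setIntegral_Sd_succ {E : Type*} [NormedAddCommGroup E] [NormedSpace ℝ E] {d : ℕ}
    {f : (Fin (d + 1) → ℝ) → E} (hf : IntegrableOn f (Sd (d + 1))) :
    ∫ x in Sd (d + 1), f x = ∫ z in Sd d, ∫ y in Set.Icc 0 (1 - ∑ i, z i), f (Fin.cons y z) := by
  have he := (volume_preserving_piFinSuccAbove (fun _ : Fin (d + 1) => ℝ) 0).symm
  have hcons : ∀ p : ℝ × (Fin d → ℝ),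
      (MeasurableEquiv.piFinSuccAbove (fun _ : Fin (d + 1) => ℝ) 0).symm p = Fin.cons p.1 p.2 :=
    fun p => Fin.insertNth_zero' p.1 p.2
  rw [← integral_indicator (measurableSet_Sd _), ← he.integral_comp', Measure.volume_eq_prod,
    integral_prod_symm, ← integral_indicator (measurableSet_Sd d)]
  · refine integral_congr_ae (ae_of_all _ fun z => ?_)
    by_cases hz : z ∈ Sd d
    · rw [Set.indicator_of_mem hz, ← integral_indicator measurableSet_Icc]
      refine integral_congr_ae (ae_of_all _ fun y => ?_)
      simp [Set.indicator, hcons, cons_mem_Sd_iff, hz]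
    · simp [Set.indicator, hcons, cons_mem_Sd_iff, hz]
  · rw [← Measure.volume_eq_prod]
    exact (he.integrable_comp_emb (MeasurableEquiv.measurableEmbedding _)).mpr
      ((integrable_indicator_iff (measurableSet_Sd _)).mpr hf)

theorem integrableOn_Sd_prod_rpow_mul_rpow {d : ℕ} {a : Fin d → ℝ} (ha : ∀ i, 0 ≤ a i) {c : ℝ}
    (hc : 0 ≤ c) :
    IntegrableOn (fun x : Fin d → ℝ => (∏ i, x i ^ a i) * (1 - ∑ i, x i) ^ c) (Sd d) := by
  refine ContinuousOn.integrableOn_compact (isCompact_Sd d) (Continuous.continuousOn ?_)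
  have := fun i => continuous_rpow_const (ha i)
  have := continuous_rpow_const hc
  fun_prop

theorem integral_Sd_prod_rpow_mul_rpow (d : ℕ) {a : Fin d → ℝ} (ha : ∀ i, 0 ≤ a i) {c : ℝ}
    (hc : 0 ≤ c) :
    ∫ x in Sd d, (∏ i, x i ^ a i) * (1 - ∑ i, x i) ^ c
      = (∏ i, Gamma (a i + 1)) * Gamma (c + 1) / Gamma (∑ i, a i + c + d + 1) := by
  induction d generalizing c with
  | zero =>
    simp [Sd, div_self (Gamma_pos_of_pos (by linarith : 0 < c + 1)).ne', Measure.real, volume_pi]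
  | succ d ih =>
    have hinner : ∀ z ∈ Sd d, ∫ y in Set.Icc 0 (1 - ∑ i, z i),
          (∏ i, (Fin.cons y z : Fin (d + 1) → ℝ) i ^ a i) *
            (1 - ∑ i, (Fin.cons y z : Fin (d + 1) → ℝ) i) ^ c
        = (∏ i, z i ^ a i.succ) * (1 - ∑ i, z i) ^ (a 0 + c + 1)
            * (Gamma (a 0 + 1) * Gamma (c + 1) / Gamma (a 0 + c + 2)) := by
      intro z hz
      have hR : 0 ≤ 1 - ∑ i, z i := by linarith [(mem_Sd_iff.1 hz).2]
      have hsplit : (fun y => (∏ i, (Fin.cons y z : Fin (d + 1) → ℝ) i ^ a i)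
            * (1 - ∑ i, (Fin.cons y z : Fin (d + 1) → ℝ) i) ^ c)
          = fun y => (∏ i, z i ^ a i.succ) * (y ^ a 0 * (1 - ∑ i, z i - y) ^ c) := by
        ext y
        simp only [Fin.prod_univ_succ, Fin.sum_univ_succ, Fin.cons_zero, Fin.cons_succ,
          sub_add_eq_sub_sub_swap]
        ring
      rw [hsplit, integral_const_mul, setIntegral_Icc_rpow_mul_sub_rpow (ha 0) hc hR]
      ring
    rw [setIntegral_Sd_succ (integrableOn_Sd_prod_rpow_mul_rpow ha hc),
      setIntegral_congr_fun (measurableSet_Sd d) hinner, integral_mul_const,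
      ih (fun i => ha i.succ) (by linarith [ha 0]), Fin.prod_univ_succ, Fin.sum_univ_succ]
    have hG : Gamma (a 0 + c + 2) ≠ 0 := (Gamma_pos_of_pos (by linarith [ha 0])).ne'
    rw [show a 0 + c + 1 + 1 = a 0 + c + 2 by ring]
    field_simp
    push_cast
    ring_nf

theorem Kdir_sq_of_mem_Sd {d : ℕ} (u : Fin d → ℝ) (v : ℝ) {x : Fin d → ℝ} (hx : x ∈ Sd d) :
    Kdir u v x ^ 2 = (Gamma (∑ i, u i + v) / (Gamma v * ∏ i, Gamma (u i))) ^ 2 *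
      ((∏ i, x i ^ ((u i - 1) * 2)) * (1 - ∑ i, x i) ^ ((v - 1) * 2)) := by
  obtain ⟨hx0, hx1⟩ := mem_Sd_iff.1 hx
  have hsq : ∀ {t : ℝ}, 0 ≤ t → ∀ y : ℝ, t ^ (y * 2) = (t ^ y) ^ 2 := fun ht y => by
    rw [rpow_mul ht, rpow_two]
  simp only [Kdir, hsq (hx0 _), hsq (sub_nonneg.2 hx1), prod_pow]
  ring

theorem integral_Kdir_sq {d : ℕ} {u : Fin d → ℝ} (hu : ∀ i, 1 ≤ u i) {v : ℝ} (hv : 1 ≤ v) :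
    ∫ x in Sd d, Kdir u v x ^ 2
      = Gamma (∑ i, u i + v) ^ 2 / Gamma (2 * (∑ i, u i + v) - d - 1) *
        (gammaCentralBinom (v - 1) * ∏ i, gammaCentralBinom (u i - 1)) := by
  rw [setIntegral_congr_fun (measurableSet_Sd d) fun x hx => Kdir_sq_of_mem_Sd u v hx,
    integral_const_mul, integral_Sd_prod_rpow_mul_rpow d (fun i => by linarith [hu i])
      (by linarith)]
  have hsum : ∑ i, (u i - 1) * 2 + (v - 1) * 2 + d + 1 = 2 * (∑ i, u i + v) - d - 1 := by
    simp only [← sum_mul, sum_sub_distrib, sum_const, card_univ, Fintype.card_fin, nsmul_eq_mul,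
      mul_one]
    ring
  have hGv : Gamma v ≠ 0 := (Gamma_pos_of_pos (by linarith)).ne'
  have hGu : ∀ i, Gamma (u i) ≠ 0 := fun i => (Gamma_pos_of_pos (by linarith [hu i])).ne'
  simp only [hsum, gammaCentralBinom, sub_add_cancel, prod_div_distrib, prod_pow]
  field_simp
  ring_nf

theorem Adir_eq {d : ℕ} {b : ℝ} (hb : 0 < b) {s : Fin d → ℝ} (hs : s ∈ Sd d) :
    Adir b s = Gamma (1 / b + d + 1) ^ 2 / Gamma (2 / b + d + 1) *
      (gammaCentralBinom ((1 - ∑ i, s i) / b) * ∏ i, gammaCentralBinom (s i / b)) := by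
  obtain ⟨hs0, hs1⟩ := mem_Sd_iff.1 hs
  have hsum : ∑ i, (s i / b + 1) + ((1 - ∑ i, s i) / b + 1) = 1 / b + d + 1 := by
    rw [sum_add_distrib, ← sum_div]
    simp only [sum_const, card_univ, Fintype.card_fin, nsmul_eq_mul, mul_one]
    field_simp
    ring
  rw [Adir, kappa, integral_Kdir_sq (fun i => by simpa using div_nonneg (hs0 i) hb.le)
    (by simpa using div_nonneg (sub_nonneg.2 hs1) hb.le), hsum]
  simp only [add_sub_cancel_right]
  ring_nf

theorem Adir_pos {d : ℕ} {b : ℝ} (hb : 0 < b) {s : Fin d → ℝ} (hs : s ∈ Sd d) :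
    0 < Adir b s := by
  obtain ⟨hs0, hs1⟩ := mem_Sd_iff.1 hs
  have hcentral : ∀ {a : ℝ}, 0 ≤ a → 0 < gammaCentralBinom a := fun ha =>
    gammaCentralBinom_pos (by linarith)
  rw [Adir_eq hb hs]
  exact mul_pos (div_pos (pow_pos (Gamma_pos_of_pos (by positivity)) 2)
    (Gamma_pos_of_pos (by positivity))) (mul_pos (hcentral (div_nonneg (by linarith) hb.le))
      (prod_pos fun i _ => hcentral (div_nonneg (hs0 i) hb.le)))

theorem Adir_le_mul_prod_four_rpow_div_sqrt {d : ℕ} {b : ℝ} (hb : 0 < b) {s : Fin d → ℝ}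
    (hs : s ∈ SdInt d) :
    Adir b s ≤ √π * (1 / b + d + 1) ^ ((d : ℝ) + 1 / 2) / 2 ^ (2 * (1 / b) + d) *
      (4 ^ ((1 - ∑ i, s i) / b) / √(π * ((1 - ∑ i, s i) / b)) *
        ∏ i, (4 ^ (s i / b) / √(π * (s i / b)))) := by
  have ha₀ : 0 < (1 - ∑ i, s i) / b := div_pos (sub_pos.2 hs.2) hb
  have ha : ∀ i, 0 < s i / b := fun i => div_pos (hs.1 i) hb
  have hprod_nonneg : 0 ≤ ∏ i, gammaCentralBinom (s i / b) :=
    prod_nonneg fun i _ => (gammaCentralBinom_pos (by linarith [ha i])).le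
  rw [Adir_eq hb (SdInt_subset_Sd d hs), show 2 / b = 2 * (1 / b) by ring]
  refine mul_le_mul (Gamma_sq_div_Gamma_two_mul_le (by linarith [one_div_pos.2 hb]) d)
    (mul_le_mul (gammaCentralBinom_le ha₀)
      (prod_le_prod (fun i _ => (gammaCentralBinom_pos (by linarith [ha i])).le)
        fun i _ => gammaCentralBinom_le (ha i)) hprod_nonneg (by positivity))
    (mul_nonneg (gammaCentralBinom_pos (by linarith)).le hprod_nonneg) (by positivity)

theorem Adir_le {d : ℕ} {b : ℝ} (hb : 0 < b) {s : Fin d → ℝ} (hs : s ∈ SdInt d) :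
    Adir b s ≤ b ^ (((d : ℝ) + 1) / 2) * (1 / b + d + 1) ^ ((d : ℝ) + 1 / 2) /
      ((4 * π) ^ ((d : ℝ) / 2) * √((1 - ∑ i, s i) * ∏ i, s i)) := by
  obtain ⟨hs0, hs1⟩ := hs
  have hprod : 4 ^ ((1 - ∑ i, s i) / b) / √(π * ((1 - ∑ i, s i) / b)) *
        ∏ i, (4 ^ (s i / b) / √(π * (s i / b)))
      = 4 ^ (1 / b) * √(b ^ (d + 1)) / (√π * √(π ^ d) * √((1 - ∑ i, s i) * ∏ i, s i)) := by
    have hexp : (1 - ∑ i, s i) / b + ∑ i, s i / b = 1 / b := by rw [← sum_div]; ring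
    have harg : π * ((1 - ∑ i, s i) / b) * ∏ i, (π * (s i / b))
        = π * π ^ d * ((1 - ∑ i, s i) * ∏ i, s i) / b ^ (d + 1) := by
      simp only [prod_mul_distrib, prod_div_distrib, prod_const, card_univ, Fintype.card_fin]
      field_simp
      ring
    have hs1' := sub_pos.2 hs1
    rw [prod_div_distrib, ← rpow_sum_of_pos four_pos,
      ← sqrt_prod _ fun i _ => by have := hs0 i; positivity, div_mul_div_comm,
      ← rpow_add four_pos, ← sqrt_mul (by positivity), hexp, harg, sqrt_div' _ (by positivity),
      sqrt_mul (by positivity), sqrt_mul (by positivity)]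
    field_simp
  have htwo : (2 : ℝ) ^ (2 * (1 / b) + d) = 4 ^ (1 / b) * 2 ^ d := by
    rw [rpow_add two_pos, rpow_mul zero_le_two, rpow_natCast]
    norm_num
  have hfourpi : (4 * π) ^ ((d : ℝ) / 2) = 2 ^ d * √(π ^ d) := by
    rw [show (d : ℝ) / 2 = d * (1 / 2) by ring, rpow_mul (by positivity), rpow_natCast,
      ← sqrt_eq_rpow, mul_pow, sqrt_mul (by positivity),
      show (4 : ℝ) ^ d = (2 ^ d) ^ 2 by rw [← pow_mul, mul_comm, pow_mul]; norm_num,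
      sqrt_sq (by positivity)]
  have hbpow : b ^ (((d : ℝ) + 1) / 2) = √(b ^ (d + 1)) := by
    rw [sqrt_eq_rpow, ← rpow_natCast, ← rpow_mul hb.le]
    push_cast
    ring_nf
  refine (Adir_le_mul_prod_four_rpow_div_sqrt hb ⟨hs0, hs1⟩).trans_eq ?_
  rw [hprod, htwo, hfourpi, hbpow]
  field_simp

theorem one_add_pow_le_of_le_one {y : ℝ} (hy0 : 0 ≤ y) (hy1 : y ≤ 1) (n : ℕ) :
    (1 + y) ^ n ≤ 1 + (2 ^ n - 1) * y := by
  induction n with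
  | zero => simp
  | succ n ih =>
    have h2n : (1 : ℝ) ≤ 2 ^ n := one_le_pow₀ one_le_two
    rw [pow_succ, pow_succ]
    nlinarith [mul_le_mul_of_nonneg_right ih (by linarith : 0 ≤ 1 + y),
      mul_nonneg (sub_nonneg.2 h2n) (mul_nonneg hy0 (sub_nonneg.2 hy1))]

theorem add_one_rpow_le {x r : ℝ} (hx : 1 ≤ x) {n : ℕ} (hrn : r ≤ n) :
    (x + 1) ^ r ≤ x ^ r * (1 + (2 ^ n - 1) / x) := by
  have hx0 : 0 < x := by linarith
  have hinv : 1 / x ≤ 1 := (div_le_one hx0).2 hx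
  calc (x + 1) ^ r = x ^ r * (1 + 1 / x) ^ r := by
        rw [← mul_rpow hx0.le (by positivity), mul_add, mul_one_div_cancel hx0.ne', mul_one]
    _ ≤ x ^ r * (1 + 1 / x) ^ n := by
        rw [← rpow_natCast]
        gcongr
        exact le_add_of_nonneg_right (by positivity)
    _ ≤ x ^ r * (1 + (2 ^ n - 1) * (1 / x)) := by
        gcongr
        exact one_add_pow_le_of_le_one (by positivity) hinv n
    _ = x ^ r * (1 + (2 ^ n - 1) / x) := by ring

theorem Ab_uniform_bound_general (d : ℕ) :
    ∃ C > (0 : ℝ), ∃ b₀ > (0 : ℝ), ∀ b ∈ Set.Ioo (0 : ℝ) b₀, ∀ s ∈ SdInt d,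
      0 < Adir b s ∧
      Adir b s ≤ b ^ (((d : ℝ) + 1) / 2) * (1 / b + (d : ℝ)) ^ ((d : ℝ) + 1 / 2) /
          ((4 * π) ^ ((d : ℝ) / 2) * Real.sqrt ((1 - ∑ i, s i) * ∏ i, s i)) *
        (1 + C * b) := by
  have hC : (1 : ℝ) ≤ 2 ^ (d + 1) - 1 := by
    have : (2 : ℝ) ≤ 2 ^ (d + 1) := le_self_pow₀ one_le_two (Nat.succ_ne_zero d)
    linarith
  refine ⟨2 ^ (d + 1) - 1, by linarith, 1, one_pos, fun b ⟨hb0, hb1⟩ s hs =>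
    ⟨Adir_pos hb0 (SdInt_subset_Sd d hs), (Adir_le hb0 hs).trans ?_⟩⟩
  have hx : 1 ≤ 1 / b + d := le_add_of_le_of_nonneg (one_le_one_div hb0 hb1.le) d.cast_nonneg
  have hxb : 1 / (1 / b + d) ≤ b := by
    simpa using one_div_le_one_div_of_le (one_div_pos.2 hb0) (le_add_of_nonneg_right d.cast_nonneg)
  have hcorr := add_one_rpow_le (r := d + 1 / 2) hx (n := d + 1) (by push_cast; linarith)
  rw [div_mul_eq_mul_div, mul_assoc]
  gcongr
  refine hcorr.trans (mul_le_mul_of_nonneg_left ?_ (by positivity))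
  gcongr
  rw [div_eq_mul_one_div]
  exact mul_le_mul_of_nonneg_left hxb (by linarith)

/-- uniform bound on `A_b(s)` (Lemma A.2, first part). -/
theorem Ab_uniform_bound (d : ℕ) (hd : 0 < d) :
    ∃ C > (0 : ℝ), ∃ b₀ > (0 : ℝ), ∀ b ∈ Set.Ioo (0 : ℝ) b₀, ∀ s ∈ SdInt d,
      0 < Adir b s ∧
      Adir b s ≤ b ^ (((d : ℝ) + 1) / 2) * (1 / b + (d : ℝ)) ^ ((d : ℝ) + 1 / 2) /
          ((4 * π) ^ ((d : ℝ) / 2) * Real.sqrt ((1 - ∑ i, s i) * ∏ i, s i)) *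
        (1 + C * b) :=
  Ab_uniform_bound_general d
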